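/- (Backward recursion for the upper block.) Let ε > 0, let x_1 < ... < x_N and y_1 < ... < y_N be strictly increasing real tuples with dividing index ζ, and let ψ ∈ ℝ^N. For i = 1, ..., N define q_i = Σ_{j=ζ(i)+1}^{N} exp(-(y_j - x_i)/ε) ψ_j. Then for every i = 1, ..., N-1, q_i = exp(-(x_{i+1} - x_i)/ε) · q_{i+1} + Σ_{j=ζ(i)+1}^{ζ(i+1)} exp(-(y_j - x_i)/ε) ψ_j. -/

import Mathlib

/-! The dividing index is monotone in `x`, so the range `ζ i + 1, …, N` of `q i` splits at
`ζ (i + 1)`; on the upper part the kernel factors as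
`exp (-(y j - x i) / ε) = exp (-(x (i + 1) - x i) / ε) * exp (-(y j - x (i + 1)) / ε)`. -/

open Finset

def IsDividingIndex (N : ℕ) (y : ℕ → ℝ) (t : ℝ) (k : ℕ) : Prop :=
  (t < y 1 → k = 0) ∧ (y N ≤ t → k = N) ∧
    (y 1 ≤ t → t < y N → (1 ≤ k ∧ k + 1 ≤ N) ∧ y k ≤ t ∧ t < y (k + 1))

namespace IsDividingIndex

variable {N : ℕ} {y : ℕ → ℝ} {t t' : ℝ} {k k' : ℕ}

theorem le (h : IsDividingIndex N y t k) : k ≤ N := by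
  obtain ⟨hlow, hhigh, hmid⟩ := h
  rcases lt_or_ge t (y 1) with hty | hyt
  · simp [hlow hty]
  rcases le_or_gt (y N) t with hyt' | hty'
  · exact (hhigh hyt').le
  · exact (Nat.le_succ k).trans (hmid hyt hty').1.2

theorem mono (hy : MonotoneOn y (Set.Icc 1 N)) (htt' : t ≤ t')
    (h : IsDividingIndex N y t k) (h' : IsDividingIndex N y t' k') : k ≤ k' := by
  obtain ⟨hlow, hhigh, hmid⟩ := h
  obtain ⟨-, hhigh', hmid'⟩ := h'
  rcases lt_or_ge t (y 1) with hty | hyt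
  · simp [hlow hty]
  rcases le_or_gt (y N) t with hyt' | hty'
  · rw [hhigh hyt', hhigh' (hyt'.trans htt')]
  obtain ⟨⟨hk1, hkN⟩, hyk, -⟩ := hmid hyt hty'
  rcases le_or_gt (y N) t' with hyt' | hty''
  · rw [hhigh' hyt']
    omega
  obtain ⟨⟨hk1', hkN'⟩, -, hty'k'⟩ := hmid' (hyt.trans htt') hty''
  by_contra! hk'k
  -- `y (k' + 1) ≤ y k ≤ t ≤ t' < y (k' + 1)`
  have hy_le : y (k' + 1) ≤ y k :=
    hy ⟨by omega, by omega⟩ ⟨hk1, by omega⟩ (by omega)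
  linarith

end IsDividingIndex

theorem sum_Icc_succ_consecutive {M : Type*} [AddCommMonoid M] (f : ℕ → M) {a b c : ℕ}
    (hab : a ≤ b) (hbc : b ≤ c) :
    ∑ j ∈ Icc (a + 1) b, f j + ∑ j ∈ Icc (b + 1) c, f j = ∑ j ∈ Icc (a + 1) c, f j := by
  simp only [Icc_add_one_left_eq_Ioc]
  exact sum_Ioc_consecutive f hab hbc

theorem Real.exp_neg_sub_div_eq_mul (ε a b c : ℝ) :
    Real.exp (-(c - a) / ε) = Real.exp (-(b - a) / ε) * Real.exp (-(c - b) / ε) := by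
  rw [← Real.exp_add]
  congr 1
  ring

theorem upper_block_backward_recursion_general
    (N : ℕ) (ε : ℝ) (x y : ℕ → ℝ)
    (hx : ∀ i j, 1 ≤ i → i < j → j ≤ N → x i < x j)
    (hy : ∀ i j, 1 ≤ i → i < j → j ≤ N → y i < y j)
    (ζ : ℕ → ℕ)
    (hζ : ∀ i, 1 ≤ i → i ≤ N →
      (x i < y 1 → ζ i = 0) ∧
      (y N ≤ x i → ζ i = N) ∧
      (y 1 ≤ x i → x i < y N →
        (1 ≤ ζ i ∧ ζ i + 1 ≤ N) ∧ y (ζ i) ≤ x i ∧ x i < y (ζ i + 1)))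
    (ψ : ℕ → ℝ) (q : ℕ → ℝ)
    (hq : ∀ i, 1 ≤ i → i ≤ N →
      q i = ∑ j ∈ Finset.Icc (ζ i + 1) N, Real.exp (-(y j - x i) / ε) * ψ j) :
    ∀ i, 1 ≤ i → i + 1 ≤ N →
      q i = Real.exp (-(x (i + 1) - x i) / ε) * q (i + 1) +
        ∑ j ∈ Finset.Icc (ζ i + 1) (ζ (i + 1)),
          Real.exp (-(y j - x i) / ε) * ψ j := by
  intro i hi hiN
  have hζi : IsDividingIndex N y (x i) (ζ i) := hζ i hi (by omega)
  have hζi' : IsDividingIndex N y (x (i + 1)) (ζ (i + 1)) := hζ (i + 1) (by omega) hiN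
  have hy_mono : MonotoneOn y (Set.Icc 1 N) :=
    StrictMonoOn.monotoneOn fun a ha b hb hab => hy a b ha.1 hab hb.2
  have hζ_le : ζ i ≤ ζ (i + 1) := hζi.mono hy_mono (hx i (i + 1) hi (by omega) hiN).le hζi'
  rw [hq i hi (by omega), hq (i + 1) (by omega) hiN,
    ← sum_Icc_succ_consecutive _ hζ_le hζi'.le, mul_sum, add_comm]
  congr 1
  refine sum_congr rfl fun j _ => ?_
  rw [Real.exp_neg_sub_div_eq_mul ε (x i) (x (i + 1)) (y j), mul_assoc]

/-- Backward recursion for the upper block: with the dividing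
index `ζ` (1-based indexing) and
`q i = ∑_{j=ζ i + 1}^{N} exp(-(y j - x i)/ε) ψ j`, one has, for `1 ≤ i ≤ N-1`,
`q i = exp(-(x (i+1) - x i)/ε) * q (i+1)
  + ∑_{j=ζ i + 1}^{ζ (i+1)} exp(-(y j - x i)/ε) ψ j`. -/
theorem upper_block_backward_recursion
    (N : ℕ) (ε : ℝ) (hε : 0 < ε) (x y : ℕ → ℝ)
    (hx : ∀ i j, 1 ≤ i → i < j → j ≤ N → x i < x j)
    (hy : ∀ i j, 1 ≤ i → i < j → j ≤ N → y i < y j)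
    (ζ : ℕ → ℕ)
    (hζ : ∀ i, 1 ≤ i → i ≤ N →
      (x i < y 1 → ζ i = 0) ∧
      (y N ≤ x i → ζ i = N) ∧
      (y 1 ≤ x i → x i < y N →
        (1 ≤ ζ i ∧ ζ i + 1 ≤ N) ∧ y (ζ i) ≤ x i ∧ x i < y (ζ i + 1)))
    (ψ : ℕ → ℝ) (q : ℕ → ℝ)
    (hq : ∀ i, 1 ≤ i → i ≤ N →
      q i = ∑ j ∈ Finset.Icc (ζ i + 1) N, Real.exp (-(y j - x i) / ε) * ψ j) :
    ∀ i, 1 ≤ i → i + 1 ≤ N →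
      q i = Real.exp (-(x (i + 1) - x i) / ε) * q (i + 1) +
        ∑ j ∈ Finset.Icc (ζ i + 1) (ζ (i + 1)),
          Real.exp (-(y j - x i) / ε) * ψ j :=
  upper_block_backward_recursion_general N ε x y hx hy ζ hζ ψ q hq
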